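/- Let φ: S¹ → S¹ be continuously differentiable and piecewise Möbius: there are points z₁, …, zₙ in counterclockwise order such that φ restricted to each arc [zⱼ, zⱼ₊₁] equals a Möbius map αⱼ ∈ PSU(1,1). Then as a distribution on the circle, e^{2iθ} S[φ](e^{iθ}) = Σⱼ λⱼ δ_{zⱼ}, where λⱼ = (φ_θθ/φ_θ)(zⱼ−) − (φ_θθ/φ_θ)(zⱼ+) ∈ ℝ is the jump of the logarithmic derivative of φ_θ at zⱼ. -/

import Mathlib

open Complex

/-- A Möbius transformation of the unit disk determined by `a, b` with `|a|² − |b|² = 1`. -/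
noncomputable def mobiusSU (a b : ℂ) (z : ℂ) : ℂ :=
  (a * z + b) / ((starRingEnd ℂ) b * z + (starRingEnd ℂ) a)

/-- The endpoint of the `j`-th arc: `θ_{j+1}`, or `θ₀ + 2π` for the last arc. -/
noncomputable def arcEnd (n : ℕ) [NeZero n] (θs : Fin n → ℝ) (j : Fin n) : ℝ :=
  if h : (j : ℕ) + 1 < n then θs ⟨(j : ℕ) + 1, h⟩ else θs 0 + 2 * Real.pi

/-- The `j`-th Möbius piece as a function of the angle: `t ↦ αⱼ(e^{it})`. -/
noncomputable def mobiusPiece (a b : ℂ) (t : ℝ) : ℂ :=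
  mobiusSU a b (Complex.exp (t * I))

/-- The jump `λⱼ = (φ_θθ/φ_θ)(θⱼ−) − (φ_θθ/φ_θ)(θⱼ+)`, computed from the Möbius pieces
`j−1` (to the left) and `j` (to the right) at the breakpoint `θⱼ`. -/
noncomputable def schwarzianJump (n : ℕ) [NeZero n] (θs : Fin n → ℝ)
    (a b : Fin n → ℂ) (j : Fin n) : ℂ :=
  deriv (deriv (mobiusPiece (a (j - 1)) (b (j - 1)))) (θs j)
      / deriv (mobiusPiece (a (j - 1)) (b (j - 1))) (θs j)
    - deriv (deriv (mobiusPiece (a j) (b j))) (θs j)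
      / deriv (mobiusPiece (a j) (b j)) (θs j)

noncomputable def mden (a b : ℂ) (t : ℝ) : ℂ :=
  (starRingEnd ℂ) b * Complex.exp (t * I) + (starRingEnd ℂ) a

noncomputable def uu (a b : ℂ) (t : ℝ) : ℂ :=
  I * ((starRingEnd ℂ) a - (starRingEnd ℂ) b * Complex.exp (t * I)) / mden a b t

theorem aux_hasDerivAt_expI (t : ℝ) :
    HasDerivAt (fun s : ℝ => Complex.exp (s * I)) (Complex.exp (t * I) * I) t := by
  have h1 : HasDerivAt (fun z : ℂ => Complex.exp (z * I)) (Complex.exp ((t : ℂ) * I) * I) (t : ℂ) := by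
    simpa [Function.comp_def] using (Complex.hasDerivAt_exp ((t : ℂ) * I)).comp (t : ℂ)
      ((hasDerivAt_id (t : ℂ)).mul_const I)
  exact h1.comp_ofReal

theorem aux_exp_mul_conj (t : ℝ) :
    Complex.exp (t * I) * (starRingEnd ℂ) (Complex.exp (t * I)) = 1 := by
  rw [Complex.mul_conj]
  norm_cast
  rw [← Complex.sq_norm, Complex.norm_exp_ofReal_mul_I, one_pow]

theorem aux_one (a b : ℂ) (hab : ‖a‖ ^ 2 - ‖b‖ ^ 2 = 1) :
    (starRingEnd ℂ) a * a - (starRingEnd ℂ) b * b = 1 := by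
  have h1 : (starRingEnd ℂ) a * a = ((‖a‖ ^ 2 : ℝ) : ℂ) := by
    rw [mul_comm, Complex.mul_conj, Complex.sq_norm]
  have h2 : (starRingEnd ℂ) b * b = ((‖b‖ ^ 2 : ℝ) : ℂ) := by
    rw [mul_comm, Complex.mul_conj, Complex.sq_norm]
  rw [h1, h2, ← Complex.ofReal_sub, hab, Complex.ofReal_one]

theorem aux_mden_ne (a b : ℂ) (hab : ‖a‖ ^ 2 - ‖b‖ ^ 2 = 1)
    (t : ℝ) : mden a b t ≠ 0 := by
  intro h
  have h2 : (starRingEnd ℂ) a = -((starRingEnd ℂ) b * Complex.exp (t * I)) := by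
    rw [eq_neg_iff_add_eq_zero, add_comm]; exact h
  have h3 := congrArg (‖·‖) h2
  simp only [norm_neg, norm_mul, Complex.norm_conj, Complex.norm_exp_ofReal_mul_I,
    mul_one] at h3
  rw [h3] at hab
  simp at hab

theorem aux_hasDerivAt_mobius (a b : ℂ) (hab : ‖a‖ ^ 2 - ‖b‖ ^ 2 = 1)
    (t : ℝ) :
    HasDerivAt (mobiusPiece a b) (I * Complex.exp (t * I) / (mden a b t) ^ 2) t := by
  have h1 := aux_one a b hab
  have hE := aux_hasDerivAt_expI t
  have hN : HasDerivAt (fun s : ℝ => a * Complex.exp (s * I) + b)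
      (a * (Complex.exp (t * I) * I)) t := (hE.const_mul a).add_const b
  have hD : HasDerivAt (mden a b) ((starRingEnd ℂ) b * (Complex.exp (t * I) * I)) t := by
    exact (hE.const_mul ((starRingEnd ℂ) b)).add_const ((starRingEnd ℂ) a)
  have key := hN.div hD (aux_mden_ne a b hab t)
  have hfun : ((fun y : ℝ => a * Complex.exp (y * I) + b) / mden a b) = mobiusPiece a b := by
    funext y; simp [mobiusPiece, mobiusSU, mden]
  rw [hfun] at key
  refine key.congr_deriv (congrArg (· / mden a b t ^ 2) (Eq.symm ?_))
  simp only [mden]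
  linear_combination (-(Complex.exp (t * I) * I)) * h1

theorem aux_deriv_mobius (a b : ℂ) (hab : ‖a‖ ^ 2 - ‖b‖ ^ 2 = 1) :
    deriv (mobiusPiece a b) = fun t : ℝ => I * Complex.exp (t * I) / (mden a b t) ^ 2 :=
  funext fun t => (aux_hasDerivAt_mobius a b hab t).deriv

theorem aux_hasDerivAt_d1 (a b : ℂ) (hab : ‖a‖ ^ 2 - ‖b‖ ^ 2 = 1)
    (t : ℝ) :
    HasDerivAt (fun s : ℝ => I * Complex.exp (s * I) / (mden a b s) ^ 2)
      ((2 * (starRingEnd ℂ) b * Complex.exp (t * I) - mden a b t)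
        * Complex.exp (t * I) / (mden a b t) ^ 3) t := by
  have hE := aux_hasDerivAt_expI t
  have hN : HasDerivAt (fun s : ℝ => I * Complex.exp (s * I))
      (I * (Complex.exp (t * I) * I)) t := hE.const_mul I
  have hD : HasDerivAt (mden a b) ((starRingEnd ℂ) b * (Complex.exp (t * I) * I)) t := by
    exact (hE.const_mul ((starRingEnd ℂ) b)).add_const ((starRingEnd ℂ) a)
  have hD2 : HasDerivAt (fun s : ℝ => (mden a b s) ^ 2)
      (((starRingEnd ℂ) b * (Complex.exp (t * I) * I)) * mden a b t
        + mden a b t * ((starRingEnd ℂ) b * (Complex.exp (t * I) * I))) t := by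
    have := hD.mul hD
    simp only [pow_two]
    exact this
  have hne : (mden a b t) ^ 2 ≠ 0 := pow_ne_zero 2 (aux_mden_ne a b hab t)
  have key := hN.div hD2 hne
  refine HasDerivAt.congr_deriv key (Eq.symm ?_)
  have hd := aux_mden_ne a b hab t
  field_simp
  linear_combination (2 * (starRingEnd ℂ) b * Complex.exp (t*I) - mden a b t) * Complex.I_mul_I

theorem aux_deriv2_mobius (a b : ℂ) (hab : ‖a‖ ^ 2 - ‖b‖ ^ 2 = 1) :
    deriv (deriv (mobiusPiece a b)) = fun t : ℝ =>
      (2 * (starRingEnd ℂ) b * Complex.exp (t * I) - mden a b t)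
        * Complex.exp (t * I) / (mden a b t) ^ 3 := by
  rw [aux_deriv_mobius a b hab]
  exact funext fun t => (aux_hasDerivAt_d1 a b hab t).deriv

theorem aux_ratio (a b : ℂ) (hab : ‖a‖ ^ 2 - ‖b‖ ^ 2 = 1) (t : ℝ) :
    deriv (deriv (mobiusPiece a b)) t / deriv (mobiusPiece a b) t = uu a b t := by
  rw [aux_deriv2_mobius a b hab, aux_deriv_mobius a b hab]
  have hd := aux_mden_ne a b hab t
  have hexp := Complex.exp_ne_zero ((t : ℂ) * I)
  simp only [uu, mden] at *
  field_simp
  linear_combination ((starRingEnd ℂ) b * Complex.exp (t*I) - (starRingEnd ℂ) a) * Complex.I_mul_I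

theorem aux_uu_hasDerivAt (a b : ℂ) (hab : ‖a‖ ^ 2 - ‖b‖ ^ 2 = 1)
    (t : ℝ) :
    HasDerivAt (uu a b) (1 / 2 * (uu a b t) ^ 2 + 1 / 2) t := by
  have hE := aux_hasDerivAt_expI t
  have hN : HasDerivAt (fun s : ℝ => I * ((starRingEnd ℂ) a - (starRingEnd ℂ) b * Complex.exp (s * I)))
      (I * (0 - (starRingEnd ℂ) b * (Complex.exp (t * I) * I))) t := by
    exact ((hasDerivAt_const t ((starRingEnd ℂ) a)).sub (hE.const_mul ((starRingEnd ℂ) b))).const_mul I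
  have hD : HasDerivAt (mden a b) ((starRingEnd ℂ) b * (Complex.exp (t * I) * I)) t := by
    exact (hE.const_mul ((starRingEnd ℂ) b)).add_const ((starRingEnd ℂ) a)
  have hd := aux_mden_ne a b hab t
  have key := hN.div hD hd
  have hfun : ((fun y : ℝ => I * ((starRingEnd ℂ) a - (starRingEnd ℂ) b * Complex.exp (y * I))) / mden a b) = uu a b := by
    funext y; simp [uu]
  rw [hfun] at key
  refine key.congr_deriv (Eq.symm ?_)
  simp only [uu, mden] at hd ⊢
  have hD2 := pow_ne_zero 2 hd
  rw [div_pow, eq_div_iff hD2, add_mul, mul_assoc, div_mul_cancel₀ _ hD2]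
  linear_combination (1 / 2 * ((starRingEnd ℂ) b * Complex.exp (t*I) + (starRingEnd ℂ) a) ^ 2) * Complex.I_mul_I

theorem aux_uu_im (a b : ℂ) (hab : ‖a‖ ^ 2 - ‖b‖ ^ 2 = 1) (t : ℝ) :
    (uu a b t).im = 1 / Complex.normSq (mden a b t) := by
  have h1 := aux_one a b hab
  have hE : Complex.exp (t * I) * (starRingEnd ℂ) (Complex.exp (t * I)) = 1 := aux_exp_mul_conj t
  have hd := aux_mden_ne a b hab t
  set c : ℂ := (starRingEnd ℂ) a - (starRingEnd ℂ) b * Complex.exp (t * I) with hc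
  set w : ℂ := (starRingEnd ℂ) a * b * (starRingEnd ℂ) (Complex.exp (t * I)) with hw
  have key : c * (starRingEnd ℂ) (mden a b t) = 1 + (w - (starRingEnd ℂ) w) := by
    simp only [hc, hw, mden, map_add, map_mul, Complex.conj_conj]
    linear_combination h1 - (starRingEnd ℂ) b * b * hE
  have hre : (c * (starRingEnd ℂ) (mden a b t)).re = 1 := by
    rw [key]
    simp [Complex.sub_conj]
  have expand : uu a b t = ((Complex.normSq (mden a b t) : ℝ) : ℂ)⁻¹ * (I * (c * (starRingEnd ℂ) (mden a b t))) := by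
    rw [uu, div_eq_mul_inv, Complex.inv_def, ← hc]
    push_cast
    ring
  rw [expand]
  rw [show ((Complex.normSq (mden a b t) : ℝ) : ℂ)⁻¹ = (((Complex.normSq (mden a b t))⁻¹ : ℝ) : ℂ) by push_cast; ring]
  rw [Complex.im_ofReal_mul, Complex.I_mul_im, hre, mul_one, one_div]

theorem aux_exp_per (t : ℝ) :
    Complex.exp (((t + 2 * Real.pi : ℝ) : ℂ) * I) = Complex.exp ((t : ℂ) * I) := by
  push_cast
  rw [add_mul, Complex.exp_add, Complex.exp_two_pi_mul_I, mul_one]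

theorem aux_periodic_deriv {E : Type*} [NormedAddCommGroup E] [NormedSpace ℝ E]
    (f : ℝ → E) (T : ℝ) (hf : Function.Periodic f T) :
    Function.Periodic (deriv f) T := by
  intro t
  have h : (fun x => f (x + T)) = f := funext hf
  rw [← deriv_comp_add_const, h]

theorem aux_uu_per (a b : ℂ) : Function.Periodic (uu a b) (2 * Real.pi) := by
  intro t
  simp only [uu, mden, aux_exp_per]

theorem aux_mobius_per (a b : ℂ) : Function.Periodic (mobiusPiece a b) (2 * Real.pi) := by
  intro t
  simp only [mobiusPiece, mobiusSU, aux_exp_per]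

theorem aux_deriv_mobius_per (a b : ℂ) (hab : ‖a‖ ^ 2 - ‖b‖ ^ 2 = 1) :
    Function.Periodic (deriv (mobiusPiece a b)) (2 * Real.pi) :=
  aux_periodic_deriv _ _ (aux_mobius_per a b)

/-- For a `C¹` piecewise Möbius circle diffeomorphism `φ` with breakpoints
`zⱼ = e^{iθⱼ}`, the distribution `e^{2iθ}S[φ](e^{iθ})` equals `Σⱼ λⱼ δ_{zⱼ}`: each jump
`λⱼ` is real, and tested against any smooth `2π`-periodic `g` (via the integration-by-parts
pairing), the Schwarzian gives `Σⱼ g(θⱼ)·λⱼ`. -/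
theorem schwarzian_piecewise_mobius (n : ℕ) [NeZero n] (φ : ℂ → ℂ)
    (θs : Fin n → ℝ) (hmono : StrictMono θs)
    (hrange : ∀ j, θs j ∈ Set.Ico (0 : ℝ) (2 * Real.pi))
    (a b : Fin n → ℂ)
    (hSU : ∀ j, (‖a j‖) ^ 2 - (‖b j‖) ^ 2 = 1)
    (F : ℝ → ℂ) (hF : F = fun t : ℝ => φ (Complex.exp (t * I)))
    (hC1 : ContDiff ℝ 1 F)
    (hpiece : ∀ j, ∀ t ∈ Set.Icc (θs j) (arcEnd n θs j),
        F t = mobiusSU (a j) (b j) (Complex.exp (t * I))) :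
    (∀ j, (schwarzianJump n θs a b j).im = 0)
    ∧ (∀ g : ℝ → ℝ, ContDiff ℝ (⊤ : ℕ∞) g → Function.Periodic g (2 * Real.pi) →
        (∫ t in (0:ℝ)..(2 * Real.pi),
            ((deriv g t : ℝ) : ℂ) * (deriv (deriv F) t / deriv F t)
              + ((g t : ℝ) : ℂ)
                * ((1 / 2) * (deriv (deriv F) t / deriv F t) ^ 2 + 1 / 2))
          = ∑ j : Fin n, ((g (θs j) : ℝ) : ℂ) * schwarzianJump n θs a b j) := by
  obtain ⟨m, rfl⟩ : ∃ m, n = m + 1 :=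
    ⟨n - 1, (Nat.succ_pred_eq_of_pos (Nat.pos_of_ne_zero (NeZero.ne n))).symm⟩
  have pi_pos := Real.pi_pos
  have hne : ∀ (j : Fin (m+1)) (t : ℝ), mden (a j) (b j) t ≠ 0 :=
    fun j t => aux_mden_ne _ _ (hSU j) t
  have hd1 : ∀ j : Fin (m+1), deriv (mobiusPiece (a j) (b j))
      = fun t : ℝ => I * Complex.exp (t * I) / (mden (a j) (b j) t) ^ 2 :=
    fun j => aux_deriv_mobius _ _ (hSU j)
  have hjump : ∀ j, schwarzianJump (m+1) θs a b j
      = uu (a (j-1)) (b (j-1)) (θs j) - uu (a j) (b j) (θs j) := by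
    intro j
    unfold schwarzianJump
    rw [aux_ratio _ _ (hSU (j-1)), aux_ratio _ _ (hSU j)]
  have hlt : ∀ j, θs j < arcEnd (m+1) θs j := by
    intro j
    unfold arcEnd
    split
    · next h => exact hmono (show j < ⟨(j:ℕ)+1, h⟩ from by simp [Fin.lt_def])
    · have h1 := (hrange j).2
      have h2 := (hrange 0).1
      linarith
  have hcontE : Continuous fun t : ℝ => Complex.exp ((t:ℂ) * I) :=
    Complex.continuous_exp.comp (Complex.continuous_ofReal.mul continuous_const)
  have hcontD : ∀ j, Continuous (mden (a j) (b j)) := by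
    intro j
    unfold mden
    exact (continuous_const.mul hcontE).add continuous_const
  have hcontψ' : ∀ j, Continuous (deriv (mobiusPiece (a j) (b j))) := by
    intro j
    rw [hd1 j]
    exact (continuous_const.mul hcontE).div ((hcontD j).pow 2) (fun t => pow_ne_zero 2 (hne j t))
  have hcontu : ∀ j, Continuous (uu (a j) (b j)) := by
    intro j
    unfold uu
    exact (continuous_const.mul (continuous_const.sub (continuous_const.mul hcontE))).div
      (hcontD j) (hne j)
  have hFeq : ∀ j, Set.EqOn F (mobiusPiece (a j) (b j))
      (Set.Icc (θs j) (arcEnd (m+1) θs j)) := fun j t ht => hpiece j t ht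
  have hcontF' : Continuous (deriv F) := hC1.continuous_deriv le_rfl
  have hderivEq : ∀ j, Set.EqOn (deriv F) (deriv (mobiusPiece (a j) (b j)))
      (Set.Icc (θs j) (arcEnd (m+1) θs j)) := by
    intro j
    have hIoo : Set.EqOn (deriv F) (deriv (mobiusPiece (a j) (b j)))
        (Set.Ioo (θs j) (arcEnd (m+1) θs j)) := by
      intro t ht
      exact Filter.EventuallyEq.deriv_eq
        (Filter.eventuallyEq_of_mem (Icc_mem_nhds ht.1 ht.2) (hFeq j))
    have hcl := hIoo.closure hcontF' (hcontψ' j)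
    rwa [closure_Ioo (hlt j).ne] at hcl
  have hdd : ∀ j, ∀ t ∈ Set.Ioo (θs j) (arcEnd (m+1) θs j),
      deriv (deriv F) t = deriv (deriv (mobiusPiece (a j) (b j))) t := by
    intro j t ht
    exact Filter.EventuallyEq.deriv_eq
      (Filter.eventuallyEq_of_mem (Icc_mem_nhds ht.1 ht.2) (hderivEq j))
  have hFper : Function.Periodic F (2 * Real.pi) := by
    intro t
    rw [hF]
    exact congrArg φ (aux_exp_per t)
  have hF'per := aux_periodic_deriv F _ hFper
  have hmatch : ∀ j, deriv (mobiusPiece (a (j-1)) (b (j-1))) (θs j)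
      = deriv (mobiusPiece (a j) (b j)) (θs j) := by
    intro j
    have hR : deriv F (θs j) = deriv (mobiusPiece (a j) (b j)) (θs j) :=
      hderivEq j ⟨le_rfl, (hlt j).le⟩
    rw [← hR]
    by_cases hj : j = 0
    · subst hj
      have hsub0 : Fin.val ((0:Fin (m+1)) - 1) = m := by
        rw [Fin.coe_sub_one, if_pos rfl]
      have harc : arcEnd (m+1) θs ((0 : Fin (m+1)) - 1) = θs 0 + 2 * Real.pi := by
        unfold arcEnd
        rw [dif_neg (by rw [hsub0]; exact lt_irrefl _)]
      have hmem : θs 0 + 2 * Real.pi ∈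
          Set.Icc (θs ((0:Fin (m+1)) - 1)) (arcEnd (m+1) θs ((0:Fin (m+1)) - 1)) := by
        rw [harc]
        refine ⟨?_, le_rfl⟩
        have h1 := (hrange ((0:Fin (m+1)) - 1)).2
        have h2 := (hrange 0).1
        linarith
      have hL := hderivEq ((0:Fin (m+1)) - 1) hmem
      have e1 : deriv F (θs 0 + 2*Real.pi) = deriv F (θs 0) := hF'per (θs 0)
      have e2 := aux_deriv_mobius_per (a ((0:Fin (m+1))-1)) (b ((0:Fin (m+1))-1)) (hSU _) (θs 0)
      rw [← e2, ← hL]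
      exact e1
    · have hv : Fin.val (j - 1) = (j : ℕ) - 1 := by
        rw [Fin.coe_sub_one, if_neg hj]
      have hvpos : 1 ≤ (j:ℕ) := Nat.one_le_iff_ne_zero.mpr (fun h => hj (Fin.ext h))
      have hjlt := j.isLt
      have harc : arcEnd (m+1) θs (j-1) = θs j := by
        unfold arcEnd
        rw [dif_pos (show Fin.val (j-1) + 1 < m + 1 by rw [hv]; omega)]
        congr 1
        exact Fin.ext (by simp only [hv]; omega)
      have hmem : θs j ∈ Set.Icc (θs (j-1)) (arcEnd (m+1) θs (j-1)) := by
        rw [harc]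
        exact ⟨(hmono (show (j-1: Fin (m+1)) < j from by rw [Fin.lt_def, hv]; omega)).le, le_rfl⟩
      exact (hderivEq (j-1) hmem).symm
  refine ⟨?_, ?_⟩
  · intro j
    rw [hjump j, Complex.sub_im, aux_uu_im _ _ (hSU _) _, aux_uu_im _ _ (hSU _) _]
    have hm := hmatch j
    rw [hd1 (j-1), hd1 j] at hm
    simp only [] at hm
    have hIE : I * Complex.exp ((θs j : ℂ) * I) ≠ 0 :=
      mul_ne_zero Complex.I_ne_zero (Complex.exp_ne_zero _)
    have h1 := pow_ne_zero 2 (hne (j-1) (θs j))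
    have h2 := pow_ne_zero 2 (hne j (θs j))
    rw [div_eq_div_iff h1 h2] at hm
    have hsq := (mul_left_cancel₀ hIE hm).symm
    have h2' := congrArg Complex.normSq hsq
    rw [map_pow, map_pow] at h2'
    have p1 := Complex.normSq_nonneg (mden (a (j-1)) (b (j-1)) (θs j))
    have p2 := Complex.normSq_nonneg (mden (a j) (b j) (θs j))
    have : Complex.normSq (mden (a (j-1)) (b (j-1)) (θs j))
        = Complex.normSq (mden (a j) (b j) (θs j)) := by
      calc Complex.normSq (mden (a (j-1)) (b (j-1)) (θs j))
          = Real.sqrt ((Complex.normSq (mden (a (j-1)) (b (j-1)) (θs j)))^2) :=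
            (Real.sqrt_sq p1).symm
        _ = Real.sqrt ((Complex.normSq (mden (a j) (b j) (θs j)))^2) := by rw [h2']
        _ = _ := Real.sqrt_sq p2
    rw [this, sub_self]
  · intro g hg hper
    have hg' : Differentiable ℝ g := hg.differentiable (by simp)
    have hgc : Continuous (deriv g) := hg.continuous_deriv (by simp)
    have hg'per : Function.Periodic (deriv g) (2*Real.pi) := aux_periodic_deriv g _ hper
    have hF''per := aux_periodic_deriv (deriv F) _ hF'per
    set f : ℝ → ℂ := fun t => ((deriv g t : ℝ) : ℂ) * (deriv (deriv F) t / deriv F t)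
        + ((g t : ℝ) : ℂ) * ((1 / 2) * (deriv (deriv F) t / deriv F t) ^ 2 + 1 / 2) with hfdef
    have hfper : Function.Periodic f (2 * Real.pi) := by
      intro t
      simp only [hfdef]
      rw [hper t, hg'per t, hF'per t, hF''per t]
    have piece : ∀ j : Fin (m+1),
        IntervalIntegrable f MeasureTheory.volume (θs j) (arcEnd (m+1) θs j) ∧
        (∫ t in (θs j)..(arcEnd (m+1) θs j), f t)
          = ((g (arcEnd (m+1) θs j) : ℝ) : ℂ) * uu (a j) (b j) (arcEnd (m+1) θs j)
            - ((g (θs j) : ℝ) : ℂ) * uu (a j) (b j) (θs j) := by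
      intro j
      set e := arcEnd (m+1) θs j with he
      have hle := (hlt j).le
      set w : ℝ → ℂ := fun t => ((deriv g t : ℝ) : ℂ) * uu (a j) (b j) t
          + ((g t : ℝ) : ℂ) * ((1 / 2) * (uu (a j) (b j) t) ^ 2 + 1 / 2) with hwdef
      have hGd : ∀ t : ℝ, HasDerivAt (fun s => ((g s : ℝ) : ℂ) * uu (a j) (b j) s) (w t) t := by
        intro t
        exact ((hg' t).hasDerivAt.ofReal_comp).mul (aux_uu_hasDerivAt _ _ (hSU j) t)
      have hwc : Continuous w := by
        apply Continuous.add
        · exact (Complex.continuous_ofReal.comp hgc).mul (hcontu j)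
        · exact (Complex.continuous_ofReal.comp hg.continuous).mul
            ((continuous_const.mul ((hcontu j).pow 2)).add continuous_const)
      have hint_w : IntervalIntegrable w MeasureTheory.volume (θs j) e :=
        hwc.intervalIntegrable _ _
      have hI1 : (∫ t in (θs j)..e, w t)
          = ((g e : ℝ):ℂ) * uu (a j) (b j) e - ((g (θs j) : ℝ):ℂ) * uu (a j) (b j) (θs j) :=
        intervalIntegral.integral_eq_sub_of_hasDerivAt (fun t _ => hGd t) hint_w
      have hsing : ∀ᵐ t : ℝ ∂MeasureTheory.volume, t ≠ e := by
        rw [MeasureTheory.ae_iff]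
        simp only [ne_eq, not_not, Set.setOf_eq_eq_singleton]
        exact Real.volume_singleton
      have haemem : ∀ᵐ t : ℝ ∂MeasureTheory.volume, t ∈ Set.uIoc (θs j) e → f t = w t := by
        filter_upwards [hsing] with t ht hmem
        rw [Set.uIoc_of_le hle] at hmem
        have htIoo : t ∈ Set.Ioo (θs j) e := ⟨hmem.1, lt_of_le_of_ne hmem.2 ht⟩
        simp only [hfdef, hwdef]
        rw [hderivEq j (Set.Ioo_subset_Icc_self htIoo), hdd j t htIoo, aux_ratio _ _ (hSU j)]
      have hI2 : (∫ t in (θs j)..e, f t) = ∫ t in (θs j)..e, w t :=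
        intervalIntegral.integral_congr_ae haemem
      have hrest : f =ᵐ[MeasureTheory.volume.restrict (Set.uIoc (θs j) e)] w :=
        (MeasureTheory.ae_restrict_iff' measurableSet_uIoc).mpr haemem
      exact ⟨hint_w.congr_ae hrest.symm, hI2.trans hI1⟩
    set A : ℕ → ℝ := fun k => if h : k < m + 1 then θs ⟨k, h⟩ else θs 0 + 2 * Real.pi with hA
    have hAj : ∀ j : Fin (m+1), A (j : ℕ) = θs j := by
      intro j; simp only [hA]; rw [dif_pos j.isLt]
    have hAj' : ∀ j : Fin (m+1), A ((j : ℕ) + 1) = arcEnd (m+1) θs j := by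
      intro j; simp only [hA]; unfold arcEnd; rfl
    have hint : ∀ k, k < m + 1 → IntervalIntegrable f MeasureTheory.volume (A k) (A (k+1)) := by
      intro k hk
      have h := (piece ⟨k, hk⟩).1
      rwa [← hAj ⟨k, hk⟩, ← hAj' ⟨k, hk⟩] at h
    have hsum := intervalIntegral.sum_integral_adjacent_intervals hint
    have hA0 : A 0 = θs 0 := by simpa using hAj 0
    have hAn : A (m+1) = θs 0 + 2*Real.pi := by simp only [hA]; rw [dif_neg (lt_irrefl _)]
    have hshift : (∫ t in (0:ℝ)..(2*Real.pi), f t)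
        = ∫ t in (θs 0)..(θs 0 + 2*Real.pi), f t := by
      have h := hfper.intervalIntegral_add_eq 0 (θs 0)
      simpa using h
    have hGe : ∀ j : Fin (m+1),
        ((g (arcEnd (m+1) θs j) : ℝ) : ℂ) * uu (a j) (b j) (arcEnd (m+1) θs j)
          = ((g (θs (j+1)) : ℝ) : ℂ) * uu (a ((j+1)-1)) (b ((j+1)-1)) (θs (j+1)) := by
      intro j
      rw [add_sub_cancel_right]
      by_cases h : (j:ℕ) + 1 < m + 1
      · have harc : arcEnd (m+1) θs j = θs (j+1) := by
          unfold arcEnd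
          rw [dif_pos h]
          congr 1
          exact Fin.ext (by
            rw [Fin.val_add_one_of_lt (by rw [Fin.lt_iff_val_lt_val, Fin.val_last]; omega)])
        rw [harc]
      · have hjm : (j:ℕ) = m := by have := j.isLt; omega
        have harc : arcEnd (m+1) θs j = θs 0 + 2*Real.pi := by
          unfold arcEnd
          rw [dif_neg h]
        have hjlast : j = Fin.last m := Fin.ext (by rw [Fin.val_last]; exact hjm)
        have hj1 : j + 1 = 0 := by rw [hjlast, Fin.last_add_one]
        rw [harc, hj1, hper (θs 0), aux_uu_per (a j) (b j) (θs 0)]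
    calc (∫ t in (0:ℝ)..(2*Real.pi), f t)
        = ∫ t in (θs 0)..(θs 0 + 2*Real.pi), f t := hshift
      _ = ∑ k ∈ Finset.range (m+1), ∫ x in A k..A (k+1), f x := by rw [hsum, hA0, hAn]
      _ = ∑ j : Fin (m+1), ∫ x in A (j:ℕ)..A ((j:ℕ)+1), f x :=
          (Fin.sum_univ_eq_sum_range (fun k => ∫ x in A k..A (k+1), f x) (m+1)).symm
      _ = ∑ j : Fin (m+1), (((g (arcEnd (m+1) θs j):ℝ):ℂ) * uu (a j) (b j) (arcEnd (m+1) θs j)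
            - ((g (θs j):ℝ):ℂ) * uu (a j) (b j) (θs j)) := by
          refine Finset.sum_congr rfl fun j _ => ?_
          rw [hAj j, hAj' j]
          exact (piece j).2
      _ = ∑ j : Fin (m+1), (((g (θs (j+1)):ℝ):ℂ) * uu (a ((j+1)-1)) (b ((j+1)-1)) (θs (j+1))
            - ((g (θs j):ℝ):ℂ) * uu (a j) (b j) (θs j)) := by
          refine Finset.sum_congr rfl fun j _ => ?_
          rw [hGe j]
      _ = (∑ j : Fin (m+1), ((g (θs j):ℝ):ℂ) * uu (a (j-1)) (b (j-1)) (θs j))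
            - ∑ j : Fin (m+1), ((g (θs j):ℝ):ℂ) * uu (a j) (b j) (θs j) := by
          rw [Finset.sum_sub_distrib]
          congr 1
          exact Fintype.sum_equiv (Equiv.addRight (1 : Fin (m+1))) _ _ (fun j => by simp)
      _ = ∑ j : Fin (m+1), ((g (θs j):ℝ):ℂ) * schwarzianJump (m+1) θs a b j := by
          rw [← Finset.sum_sub_distrib]
          refine Finset.sum_congr rfl fun j _ => ?_
          rw [hjump j, mul_sub]
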